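/- arXiv:2001.08705 — 4 statements merged into one kernel-verified Lean document; each statement's English description precedes it below -/
import Mathlib

section
/- Let k be a positive integer, p = 1/k, and X a finite set of size l. Then there exists a function g from the set of partitions of X to [0,1] such that for every nonempty subset A of X, the sum of g(T) over all partitions T of X containing A as a block equals p^{|A|} (1-p)^{l-|A|}. -/
open Finset

/-- `T` is a partition of the finite type `α` (viewed as the set `X`): a collection of
pairwise disjoint nonempty subsets whose union is all of `X`. -/
def IsPartitionOf {α : Type*} [Fintype α] [DecidableEq α] (T : Finset (Finset α)) : Prop :=
  (∀ B ∈ T, B.Nonempty) ∧ (∀ B ∈ T, ∀ C ∈ T, B ≠ C → Disjoint B C) ∧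
    T.biUnion id = Finset.univ

instance {α : Type*} [Fintype α] [DecidableEq α] :
    DecidablePred (IsPartitionOf (α := α)) := fun T => by
  unfold IsPartitionOf; infer_instance

/-!
Colour `X` uniformly at random with `k` colours and let `g T` be `1 / k` times the probability
that the colour classes form the partition `T`. Then the sum of `g T` over the partitions having
`A` as a block is `1 / k` times the probability that `A` is a full colour class. That happens for
exactly `k · (k - 1) ^ (l - |A|)` of the `k ^ l` colourings: pick the colour of `A`, then give every
point outside `A` another colour. Hence the sum is `(1 / k) ^ |A| · (1 - 1 / k) ^ (l - |A|)`.
-/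

section FiberPartition

variable {α β : Type*} [Fintype α] [DecidableEq α] [DecidableEq β]

def fiberPartition (f : α → β) : Finset (Finset α) :=
  univ.image fun x => ({y | f y = f x} : Finset α)

theorem isPartitionOf_fiberPartition (f : α → β) : IsPartitionOf (fiberPartition f) := by
  refine ⟨?_, ?_, ?_⟩
  · simp only [fiberPartition, mem_image, mem_univ, true_and, forall_exists_index,
      forall_apply_eq_imp_iff]
    exact fun x => ⟨x, by simp⟩
  · simp only [fiberPartition, mem_image, mem_univ, true_and, forall_exists_index,
      forall_apply_eq_imp_iff]
    intro x y hne
    refine disjoint_left.mpr fun z hzx hzy => hne ?_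
    ext w
    simp_all
  · ext x
    simp only [mem_biUnion, id, mem_univ, iff_true]
    exact ⟨_, mem_image_of_mem _ (mem_univ x), by simp⟩

theorem mem_fiberPartition_iff {f : α → β} {A : Finset α} {x : α} (hx : x ∈ A) :
    A ∈ fiberPartition f ↔ ∀ y, f y = f x ↔ y ∈ A := by
  simp only [fiberPartition, mem_image, mem_univ, true_and]
  constructor
  · rintro ⟨z, rfl⟩ y
    simp only [mem_filter, mem_univ, true_and] at hx ⊢
    rw [hx]
  · exact fun h => ⟨x, by ext y; simpa using h y⟩

variable [Fintype β]

theorem card_filter_forall_eq_iff_mem (A : Finset α) (c : β) :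
    #{f : α → β | ∀ y, f y = c ↔ y ∈ A} = (Fintype.card β - 1) ^ (Fintype.card α - #A) := by
  have hpi : ({f : α → β | ∀ y, f y = c ↔ y ∈ A} : Finset (α → β))
      = Fintype.piFinset fun y => if y ∈ A then {c} else univ.erase c := by
    ext f
    simp only [mem_filter, mem_univ, true_and, Fintype.mem_piFinset]
    refine forall_congr' fun y => ?_
    split_ifs with hy <;> simp [hy]
  rw [hpi, Fintype.card_piFinset]
  simp only [apply_ite card]
  rw [prod_ite, prod_const, prod_const, card_singleton, one_pow,
    one_mul, card_erase_of_mem (mem_univ c), card_univ, filter_not, filter_mem_eq_inter,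
    univ_inter, card_sdiff_of_subset (subset_univ A), card_univ]

theorem card_filter_mem_fiberPartition {A : Finset α} (hA : A.Nonempty) :
    #{f : α → β | A ∈ fiberPartition f}
      = Fintype.card β * (Fintype.card β - 1) ^ (Fintype.card α - #A) := by
  obtain ⟨x, hx⟩ := hA
  rw [card_eq_sum_card_fiberwise (f := fun f : α → β => f x) (t := univ)
    fun _ _ => mem_coe.mpr (mem_univ _)]
  have hfiber (c : β) : {f ∈ ({f | A ∈ fiberPartition f} : Finset (α → β)) | f x = c}
      = ({f | ∀ y, f y = c ↔ y ∈ A} : Finset (α → β)) := by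
    rw [filter_filter]
    refine filter_congr fun f _ => ?_
    rw [mem_fiberPartition_iff hx]
    constructor
    · rintro ⟨h, rfl⟩
      exact h
    · intro h
      obtain rfl : f x = c := (h x).mpr hx
      exact ⟨h, rfl⟩
  rw [sum_congr rfl fun c _ => by rw [hfiber c, card_filter_forall_eq_iff_mem], sum_const,
    card_univ, smul_eq_mul]

end FiberPartition

theorem mul_sub_one_pow_div_pow_succ {k : ℝ} (hk : k ≠ 0) {a l : ℕ} (ha : a ≤ l) :
    k * (k - 1) ^ (l - a) / k ^ (l + 1) = (1 / k) ^ a * (1 - 1 / k) ^ (l - a) := by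
  rw [one_sub_div hk, div_pow, div_pow, one_pow, div_mul_div_comm, one_mul, ← pow_add,
    Nat.add_sub_cancel' ha, pow_succ']
  field_simp

theorem stmt_0 {α : Type*} [Fintype α] [DecidableEq α] (l : ℕ) (hl : Fintype.card α = l)
    (k : ℕ) (hk : 0 < k) (p : ℝ) (hp : p = 1 / k) :
    ∃ g : Finset (Finset α) → ℝ,
      (∀ T, 0 ≤ g T ∧ g T ≤ 1) ∧
      ∀ A : Finset α, A.Nonempty →
        ∑ T ∈ Finset.univ.filter (fun T : Finset (Finset α) => IsPartitionOf T ∧ A ∈ T), g T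
          = p ^ A.card * (1 - p) ^ (l - A.card) := by
  subst hl hp
  have hk₀ : (0 : ℝ) < k := Nat.cast_pos.mpr hk
  refine ⟨fun T => #{f : α → Fin k | fiberPartition f = T} / (k : ℝ) ^ (Fintype.card α + 1),
    fun T => ⟨by positivity, ?_⟩, fun A hA => ?_⟩
  · rw [div_le_one (by positivity)]
    calc (#{f : α → Fin k | fiberPartition f = T} : ℝ)
        ≤ #(univ : Finset (α → Fin k)) := Nat.cast_le.mpr (card_filter_le _ _)
      _ = (k : ℝ) ^ Fintype.card α := by simp
      _ ≤ (k : ℝ) ^ (Fintype.card α + 1) :=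
        pow_le_pow_right₀ (Nat.one_le_cast.mpr hk) (Nat.le_succ _)
  · have hcount : ∑ T ∈ {T : Finset (Finset α) | IsPartitionOf T ∧ A ∈ T},
          #{f : α → Fin k | fiberPartition f = T} = #{f : α → Fin k | A ∈ fiberPartition f} := by
      rw [sum_card_fiberwise_eq_card_filter]
      simp [isPartitionOf_fiberPartition]
    rw [← sum_div, ← Nat.cast_sum, hcount, card_filter_mem_fiberPartition hA, Fintype.card_fin,
      Nat.cast_mul, Nat.cast_pow, Nat.cast_sub hk, Nat.cast_one]
    exact mul_sub_one_pow_div_pow_succ hk₀.ne' (card_le_univ A)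
end

section
/- Fix m ∈ ℕ, γ > 0, p ∈ (0,1), and let K > 4/(γ(1-p)^{2m}) be an integer. With high probability as n → ∞, the random graph G(n,p) contains no collection of sets S, T₁, ..., T_K of vertices such that the Tᵢ are pairwise disjoint, each |Tᵢ| = m, |S| ≥ γn, and for every i, all but at most ((1-p)^m/4)γn vertices of S are adjacent to at least one vertex of Tᵢ. -/
/-!
Fix `S` with `|S| ≥ γn` and disjoint `m`-sets `T₁, …, T_K`, and put `q = (1-p)^m`. For `v` in
`S' = S \ ⋃ Tᵢ` the edge sets from `v` to the `Tᵢ` are pairwise disjoint, so the number `k` of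
pairs `(v, i)` such that `v` has no neighbour in `Tᵢ` is binomial with `K|S'| ≥ K(γn - Km)` trials
and success probability `q`, while the event forces `k ≤ Kqγn/4`, a quarter of its mean.
Markov's inequality for `4^{-k}` bounds its probability by `4^{Kqγn/4} (1 - 3q/4)^{K|S'|}`, which
is at most `C e^{-(3/4 - log 4 / 4) s n}` with `s = Kγq > 4`. A union bound over the at most
`2^n n^{mK}` choices of `(S, T)` leaves `C n^{mK} ρ^n` with `ρ = 2 e^{-(3/4 - log 4 / 4) s} < 1`.
-/

open MeasureTheory Filter

/-- The Erdős–Rényi measure on graphs with vertex set `Fin n`: each potential edge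
(an element of `Sym2 (Fin n)`) is present independently with probability `p`. -/
noncomputable def gnpMeasure (n : ℕ) (p : ℝ) (hp : ENNReal.ofReal p ≤ 1) :
    Measure (Sym2 (Fin n) → Bool) :=
  Measure.pi fun _ => (PMF.bernoulli p.toNNReal (ENNReal.coe_le_one_iff.mp hp)).toMeasure

/-- Adjacency in the random graph encoded by edge indicators `ω`. -/
def gnpAdj {n : ℕ} (ω : Sym2 (Fin n) → Bool) (v w : Fin n) : Prop :=
  v ≠ w ∧ ω s(v, w) = true

instance {n : ℕ} (ω : Sym2 (Fin n) → Bool) : DecidableRel (gnpAdj ω) := fun v w => by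
  unfold gnpAdj; infer_instance

/-- Degree of `v` in the random graph encoded by `ω`. -/
def gnpDeg {n : ℕ} (ω : Sym2 (Fin n) → Bool) (v : Fin n) : ℕ :=
  (Finset.univ.filter fun w => gnpAdj ω v w).card

open Finset

lemma sum_filter_exists_le_sum_sum_filter {ι β : Type*} (s : Finset ι) (t : Finset β)
    (P : ι → β → Prop) [∀ i, DecidablePred (P i)] {f : β → ℝ} (hf : ∀ b ∈ t, 0 ≤ f b) :
    ∑ b ∈ t with ∃ i ∈ s, P i b, f b ≤ ∑ i ∈ s, ∑ b ∈ t with P i b, f b := by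
  simp_rw [sum_filter]
  rw [sum_comm]
  refine sum_le_sum fun b hb => ?_
  have hterm : ∀ i ∈ s, 0 ≤ if P i b then f b else 0 := fun i _ => by
    split_ifs
    exacts [hf b hb, le_rfl]
  split_ifs with h
  · obtain ⟨i, hi, hPi⟩ := h
    simpa [hPi] using single_le_sum hterm hi
  · exact sum_nonneg hterm

section BernoulliWeight

variable {α : Type*} [Fintype α]

def bernoulliWeight (p : ℝ) (ω : α → Bool) : ℝ :=
  ∏ e, if ω e then p else 1 - p

lemma bernoulliWeight_nonneg {p : ℝ} (hp0 : 0 ≤ p) (hp1 : p ≤ 1) (ω : α → Bool) :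
    0 ≤ bernoulliWeight p ω :=
  prod_nonneg fun e _ => by split <;> linarith

variable [DecidableEq α]

lemma sum_bernoulliWeight_mul_prod_absent (p : ℝ) (D : Finset α) :
    ∑ ω, bernoulliWeight p ω * ∏ e ∈ D, (if ω e then 0 else 1) = (1 - p) ^ #D := by
  have hfactor : ∀ ω : α → Bool, bernoulliWeight p ω * ∏ e ∈ D, (if ω e then 0 else 1) =
      ∏ e, (if ω e then p else 1 - p) * (if e ∈ D then (if ω e then 0 else 1) else 1) := by
    intro ω
    rw [prod_mul_distrib, bernoulliWeight, prod_ite_mem, univ_inter]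
  have hcoord : ∀ e : α, ∑ b : Bool, (if b then p else 1 - p) *
      (if e ∈ D then (if b then 0 else 1) else 1) = if e ∈ D then 1 - p else 1 := by
    intro e
    by_cases he : e ∈ D <;> simp [he]
  simp_rw [hfactor]
  rw [← Fintype.prod_sum fun e (b : Bool) =>
      (if b then p else 1 - p) * (if e ∈ D then (if b then 0 else 1) else 1),
    Fintype.prod_congr _ _ hcoord, prod_ite_mem, univ_inter, prod_const]

lemma sum_bernoulliWeight (p : ℝ) : ∑ ω : α → Bool, bernoulliWeight p ω = 1 := by
  simpa using sum_bernoulliWeight_mul_prod_absent p (∅ : Finset α)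

variable {ι : Type*} {U : Finset ι} {blk : ι → Finset α} {m : ℕ}

lemma sum_bernoulliWeight_mul_prod_one_add (p c : ℝ) (hcard : ∀ u ∈ U, #(blk u) = m)
    (hdisj : (U : Set ι).PairwiseDisjoint blk) :
    ∑ ω, bernoulliWeight p ω * ∏ u ∈ U, (1 + c * ∏ e ∈ blk u, (if ω e then 0 else 1)) =
      (1 + c * (1 - p) ^ m) ^ #U := by
  have hexpand : ∀ ω : α → Bool,
      ∏ u ∈ U, (1 + c * ∏ e ∈ blk u, (if ω e then 0 else 1)) =
        ∑ A ∈ U.powerset, c ^ #A * ∏ e ∈ A.biUnion blk, (if ω e then 0 else 1) := by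
    intro ω
    rw [prod_one_add]
    refine sum_congr rfl fun A hA => ?_
    rw [prod_mul_distrib, prod_const,
      prod_biUnion (hdisj.subset (by simpa using mem_powerset.1 hA))]
  have hterm : ∀ A ∈ U.powerset,
      ∑ ω, bernoulliWeight p ω * (c ^ #A * ∏ e ∈ A.biUnion blk, (if ω e then 0 else 1)) =
        (c * (1 - p) ^ m) ^ #A := by
    intro A hA
    have hAU := mem_powerset.1 hA
    simp_rw [mul_left_comm _ (c ^ #A), ← mul_sum, sum_bernoulliWeight_mul_prod_absent,
      card_biUnion (hdisj.subset (by simpa using hAU)), sum_congr rfl fun u hu => hcard u (hAU hu),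
      sum_const, smul_eq_mul, mul_pow, ← pow_mul, mul_comm m]
  simp_rw [hexpand, mul_sum]
  rw [sum_comm, sum_congr rfl hterm]
  simpa using (prod_one_add (f := fun _ => c * (1 - p) ^ m) U).symm

lemma sum_bernoulliWeight_mul_pow_card_empty (p t : ℝ) (hcard : ∀ u ∈ U, #(blk u) = m)
    (hdisj : (U : Set ι).PairwiseDisjoint blk) :
    ∑ ω, bernoulliWeight p ω * t ^ #{u ∈ U | ∀ e ∈ blk u, ω e = false} =
      (1 - (1 - t) * (1 - p) ^ m) ^ #U := by
  have hfactor : ∀ ω : α → Bool, t ^ #{u ∈ U | ∀ e ∈ blk u, ω e = false} =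
      ∏ u ∈ U, (1 + (t - 1) * ∏ e ∈ blk u, (if ω e then 0 else 1)) := by
    intro ω
    have hempty : ∀ u, 1 + (t - 1) * ∏ e ∈ blk u, (if ω e then 0 else 1) =
        if ∀ e ∈ blk u, ω e = false then t else 1 := by
      intro u
      split_ifs with h
      · rw [prod_eq_one fun e he => by simp [h e he]]
        ring
      · push Not at h
        obtain ⟨e, he, hωe⟩ := h
        rw [prod_eq_zero he (by simp_all)]
        ring
    rw [prod_congr rfl fun u _ => hempty u, prod_ite, prod_const, prod_const_one, mul_one]
  simp_rw [hfactor, sum_bernoulliWeight_mul_prod_one_add p (t - 1) hcard hdisj]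
  ring_nf

-- Markov's inequality for `exp (-θ k)`, `k` the number of empty blocks.
lemma sum_bernoulliWeight_card_empty_le {p : ℝ} (hp0 : 0 ≤ p) (hp1 : p ≤ 1) {θ : ℝ}
    (hθ : 0 ≤ θ) (c : ℝ) (hcard : ∀ u ∈ U, #(blk u) = m)
    (hdisj : (U : Set ι).PairwiseDisjoint blk) :
    ∑ ω with (#{u ∈ U | ∀ e ∈ blk u, ω e = false} : ℝ) ≤ c, bernoulliWeight p ω ≤
      Real.exp (θ * c) * (1 - (1 - Real.exp (-θ)) * (1 - p) ^ m) ^ #U := by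
  rw [sum_filter, ← sum_bernoulliWeight_mul_pow_card_empty p _ hcard hdisj, mul_sum]
  refine sum_le_sum fun ω _ => ?_
  have hW := bernoulliWeight_nonneg hp0 hp1 ω
  split_ifs with hk
  · rw [mul_left_comm, ← Real.exp_nat_mul, ← Real.exp_add]
    refine le_mul_of_one_le_right hW (Real.one_le_exp ?_)
    nlinarith
  · positivity

end BernoulliWeight

section GnpMeasure

variable {n : ℕ} {p : ℝ}

lemma gnpMeasure_singleton (hp0 : 0 ≤ p) (hple : ENNReal.ofReal p ≤ 1) (ω : Sym2 (Fin n) → Bool) :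
    gnpMeasure n p hple {ω} = ENNReal.ofReal (bernoulliWeight p ω) := by
  have hp1 := ENNReal.ofReal_le_one.1 hple
  rw [← Set.univ_pi_singleton ω, gnpMeasure, Measure.pi_pi, bernoulliWeight,
    ENNReal.ofReal_prod_of_nonneg fun e _ => by split <;> linarith]
  refine prod_congr rfl fun e _ => ?_
  rw [PMF.toMeasure_apply_singleton _ _ (measurableSet_singleton _), PMF.bernoulli_apply]
  cases ω e <;> simp [ENNReal.ofReal_sub _ hp0] <;> rfl

lemma gnpMeasure_setOf (hp0 : 0 ≤ p) (hple : ENNReal.ofReal p ≤ 1)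
    (P : (Sym2 (Fin n) → Bool) → Prop) [DecidablePred P] :
    gnpMeasure n p hple {ω | P ω} = ENNReal.ofReal (∑ ω with P ω, bernoulliWeight p ω) := by
  have hp1 := ENNReal.ofReal_le_one.1 hple
  rw [ENNReal.ofReal_sum_of_nonneg fun ω _ => bernoulliWeight_nonneg hp0 hp1 ω,
    ← Finset.coe_filter_univ, ← sum_measure_singleton]
  exact sum_congr rfl fun ω _ => gnpMeasure_singleton hp0 hple ω

lemma tendsto_gnpMeasure_setOf_not (hp0 : 0 ≤ p) (hple : ENNReal.ofReal p ≤ 1)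
    (P : ∀ n : ℕ, (Sym2 (Fin n) → Bool) → Prop) [∀ n, DecidablePred (P n)] {f : ℕ → ℝ}
    (hf : Tendsto f atTop (nhds 0)) (hPf : ∀ n, ∑ ω with P n ω, bernoulliWeight p ω ≤ f n) :
    Tendsto (fun n => gnpMeasure n p hple {ω | ¬ P n ω}) atTop (nhds 1) := by
  have hp1 := ENNReal.ofReal_le_one.1 hple
  have hcompl : ∀ n, gnpMeasure n p hple {ω | ¬ P n ω} =
      ENNReal.ofReal (1 - ∑ ω with P n ω, bernoulliWeight p ω) := by
    intro n
    rw [gnpMeasure_setOf hp0 hple, ← sum_bernoulliWeight (α := Sym2 (Fin n)) p,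
      ← sum_filter_add_sum_filter_not univ (P n), add_sub_cancel_left]
  have hbad : Tendsto (fun n => ∑ ω with P n ω, bernoulliWeight p ω) atTop (nhds 0) :=
    squeeze_zero (fun n => sum_nonneg fun ω _ => bernoulliWeight_nonneg hp0 hp1 ω) hPf hf
  simpa only [hcompl, sub_zero, ENNReal.ofReal_one] using
    ENNReal.tendsto_ofReal ((tendsto_const_nhds (x := (1 : ℝ))).sub hbad)

end GnpMeasure

section Configurations

variable {n K m : ℕ} {p : ℝ}

def edgesTo (v : Fin n) (T : Finset (Fin n)) : Finset (Sym2 (Fin n)) :=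
  T.image (s(v, ·))

lemma card_edgesTo {v : Fin n} {T : Finset (Fin n)} (hv : v ∉ T) : #(edgesTo v T) = #T :=
  card_image_of_injOn fun w hw w' _ h => by
    rcases Sym2.eq_iff.1 h with ⟨-, h⟩ | ⟨-, rfl⟩
    · exact h
    · exact absurd hw hv

lemma pairwiseDisjoint_edgesTo (S : Finset (Fin n)) {T : Fin K → Finset (Fin n)}
    (hT : ∀ i j, i ≠ j → Disjoint (T i) (T j)) :
    (↑((S \ univ.biUnion T) ×ˢ (univ : Finset (Fin K))) : Set (Fin n × Fin K)).PairwiseDisjoint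
      fun u => edgesTo u.1 (T u.2) := by
  rintro ⟨v, i⟩ hu ⟨v', i'⟩ hu' hne
  simp only [coe_product, coe_sdiff, coe_biUnion, coe_univ, Set.mem_univ, Set.iUnion_true,
    Set.mem_prod, Set.mem_sdiff, mem_coe, Set.mem_iUnion, not_exists, and_true] at hu hu'
  rw [Function.onFun, disjoint_left]
  simp only [edgesTo, mem_image]
  rintro e ⟨w, hw, rfl⟩ ⟨w', hw', h⟩
  rcases Sym2.eq_iff.1 h with ⟨rfl, rfl⟩ | ⟨hvw', -⟩
  · obtain rfl : i = i' := by
      by_contra hii'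
      exact disjoint_left.1 (hT _ _ hii') hw hw'
    exact hne rfl
  · exact hu'.2 i (hvw' ▸ hw)

lemma card_filter_edgesTo_absent_le (ω : Sym2 (Fin n) → Bool) (S : Finset (Fin n))
    (T : Fin K → Finset (Fin n)) :
    #{u ∈ (S \ univ.biUnion T) ×ˢ univ | ∀ e ∈ edgesTo u.1 (T u.2), ω e = false} ≤
      ∑ i, #{v ∈ S | ¬ ∃ w ∈ T i, gnpAdj ω v w} := by
  calc #{u ∈ (S \ univ.biUnion T) ×ˢ univ | ∀ e ∈ edgesTo u.1 (T u.2), ω e = false}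
      ≤ #{u ∈ S ×ˢ univ | ¬ ∃ w ∈ T u.2, gnpAdj ω u.1 w} := by
        refine card_le_card fun u hu => ?_
        rw [mem_filter, mem_product, Finset.mem_sdiff] at hu
        refine mem_filter.2 ⟨mem_product.2 ⟨hu.1.1.1, mem_univ _⟩, fun ⟨w, hw, hadj⟩ => ?_⟩
        have habsent : ω s(u.1, w) = false := hu.2 _ (mem_image_of_mem _ hw)
        exact Bool.false_ne_true (habsent ▸ hadj.2)
    _ = ∑ i, #{v ∈ S | ¬ ∃ w ∈ T i, gnpAdj ω v w} := by
        simp only [card_filter, sum_product_right]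

lemma sub_le_card_sdiff_biUnion (S : Finset (Fin n)) {T : Fin K → Finset (Fin n)}
    (hTm : ∀ i, #(T i) = m) : (#S : ℝ) - K * m ≤ #(S \ univ.biUnion T) := by
  have hunion : #(univ.biUnion T) ≤ K * m := by
    simpa using card_biUnion_le_card_mul univ T m fun i _ => (hTm i).le
  have := card_le_card_sdiff_add_card (s := S) (t := univ.biUnion T)
  rw [sub_le_iff_le_add]
  exact_mod_cast this.trans (by omega)

lemma sum_bernoulliWeight_forall_card_nonadjacent_le (hp0 : 0 ≤ p) (hp1 : p ≤ 1) {θ : ℝ}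
    (hθ : 0 ≤ θ) (δ : ℝ) {S : Finset (Fin n)} {s : ℝ} (hS : s ≤ #S)
    {T : Fin K → Finset (Fin n)} (hT : ∀ i j, i ≠ j → Disjoint (T i) (T j))
    (hTm : ∀ i, #(T i) = m) :
    ∑ ω with ∀ i, (#{v ∈ S | ¬ ∃ w ∈ T i, gnpAdj ω v w} : ℝ) ≤ δ, bernoulliWeight p ω ≤
      Real.exp (θ * (K * δ) - (1 - Real.exp (-θ)) * (1 - p) ^ m * (K * (s - K * m))) := by
  set U := (S \ univ.biUnion T) ×ˢ (univ : Finset (Fin K))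
  set x := (1 - Real.exp (-θ)) * (1 - p) ^ m
  have hx0 : 0 ≤ x := mul_nonneg (by simpa using Real.exp_le_one_iff.2 (neg_nonpos.2 hθ))
    (pow_nonneg (by linarith) m)
  have hx1 : x ≤ 1 := mul_le_one₀ (by linarith [Real.exp_pos (-θ)]) (pow_nonneg (by linarith) m)
    (pow_le_one₀ (by linarith) (by linarith))
  have hU : (K : ℝ) * (s - K * m) ≤ #U := by
    rw [card_product, card_univ, Fintype.card_fin, Nat.cast_mul, mul_comm (K : ℝ)]
    exact mul_le_mul_of_nonneg_right ((sub_le_sub_right hS _).trans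
      (sub_le_card_sdiff_biUnion S hTm)) K.cast_nonneg
  have hfew : ∀ ω : Sym2 (Fin n) → Bool,
      (∀ i, (#{v ∈ S | ¬ ∃ w ∈ T i, gnpAdj ω v w} : ℝ) ≤ δ) →
        (#{u ∈ U | ∀ e ∈ edgesTo u.1 (T u.2), ω e = false} : ℝ) ≤ K * δ := fun ω hω =>
    calc (#{u ∈ U | ∀ e ∈ edgesTo u.1 (T u.2), ω e = false} : ℝ)
        ≤ ∑ i, (#{v ∈ S | ¬ ∃ w ∈ T i, gnpAdj ω v w} : ℝ) := by
          exact_mod_cast card_filter_edgesTo_absent_le ω S T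
      _ ≤ K * δ := by simpa using sum_le_sum fun i (_ : i ∈ univ) => hω i
  calc ∑ ω with ∀ i, (#{v ∈ S | ¬ ∃ w ∈ T i, gnpAdj ω v w} : ℝ) ≤ δ, bernoulliWeight p ω
      ≤ ∑ ω with (#{u ∈ U | ∀ e ∈ edgesTo u.1 (T u.2), ω e = false} : ℝ) ≤ K * δ,
          bernoulliWeight p ω :=
        sum_le_sum_of_subset_of_nonneg (monotone_filter_right _ fun ω _ => hfew ω)
          fun ω _ _ => bernoulliWeight_nonneg hp0 hp1 ω
    _ ≤ Real.exp (θ * (K * δ)) * (1 - x) ^ #U :=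
        sum_bernoulliWeight_card_empty_le hp0 hp1 hθ _
          (fun u hu => (card_edgesTo ((Finset.mem_sdiff.1 (mem_product.1 hu).1).2 <|
            mem_biUnion.2 ⟨u.2, mem_univ _, ·⟩)).trans (hTm u.2))
          (pairwiseDisjoint_edgesTo S hT)
    _ ≤ Real.exp (θ * (K * δ)) * Real.exp (-x * (K * (s - K * m))) := by
        gcongr
        calc (1 - x) ^ #U ≤ Real.exp (-x) ^ #U :=
              pow_le_pow_left₀ (by linarith) (Real.one_sub_le_exp_neg x) _
          _ = Real.exp (-x * #U) := by rw [← Real.exp_nat_mul, mul_comm]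
          _ ≤ Real.exp (-x * (K * (s - K * m))) := Real.exp_le_exp.2 (by nlinarith)
    _ = _ := by rw [← Real.exp_add]; ring_nf

variable (n K m) in
def configurations : Finset (Finset (Fin n) × (Fin K → Finset (Fin n))) :=
  univ ×ˢ Fintype.piFinset fun _ => powersetCard m univ

lemma mem_configurations {S : Finset (Fin n)} {T : Fin K → Finset (Fin n)} :
    (S, T) ∈ configurations n K m ↔ ∀ i, #(T i) = m := by
  simp [configurations, mem_powersetCard]

lemma card_configurations_le : (#(configurations n K m) : ℝ) ≤ 2 ^ n * (n : ℝ) ^ (m * K) := by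
  have : #(configurations n K m) ≤ 2 ^ n * n ^ (m * K) := by
    rw [configurations, card_product, Fintype.card_piFinset, pow_mul]
    simp only [card_univ, Fintype.card_finset, Fintype.card_fin, card_powersetCard, prod_const]
    gcongr
    exact Nat.choose_le_pow n m
  exact_mod_cast this

lemma sum_bernoulliWeight_exists_config_le (hp0 : 0 ≤ p) (hp1 : p ≤ 1) {θ : ℝ} (hθ : 0 ≤ θ)
    (γ δ : ℝ) :
    ∑ ω with ∃ (S : Finset (Fin n)) (T : Fin K → Finset (Fin n)),
        (∀ i j, i ≠ j → Disjoint (T i) (T j)) ∧ (∀ i, #(T i) = m) ∧ γ * n ≤ (#S : ℝ) ∧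
        ∀ i, (#{v ∈ S | ¬ ∃ w ∈ T i, gnpAdj ω v w} : ℝ) ≤ δ, bernoulliWeight p ω ≤
      2 ^ n * (n : ℝ) ^ (m * K) *
        Real.exp (θ * (K * δ) - (1 - Real.exp (-θ)) * (1 - p) ^ m * (K * (γ * n - K * m))) := by
  set cfgs := {x ∈ configurations n K m |
    (∀ i j, i ≠ j → Disjoint (x.2 i) (x.2 j)) ∧ γ * n ≤ (#x.1 : ℝ)}
  set B := Real.exp (θ * (K * δ) - (1 - Real.exp (-θ)) * (1 - p) ^ m * (K * (γ * n - K * m)))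
  have hW : ∀ ω ∈ (univ : Finset (Sym2 (Fin n) → Bool)), 0 ≤ bernoulliWeight p ω :=
    fun ω _ => bernoulliWeight_nonneg hp0 hp1 ω
  calc _ ≤ ∑ ω with ∃ x ∈ cfgs, ∀ i,
          (#{v ∈ x.1 | ¬ ∃ w ∈ x.2 i, gnpAdj ω v w} : ℝ) ≤ δ, bernoulliWeight p ω := by
        refine sum_le_sum_of_subset_of_nonneg (monotone_filter_right _ ?_)
          fun ω _ _ => hW ω (mem_univ ω)
        rintro ω - ⟨S, T, hT, hTm, hS, hδ⟩
        exact ⟨(S, T), mem_filter.2 ⟨mem_configurations.2 hTm, hT, hS⟩, hδ⟩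
    _ ≤ ∑ x ∈ cfgs, ∑ ω with ∀ i,
          (#{v ∈ x.1 | ¬ ∃ w ∈ x.2 i, gnpAdj ω v w} : ℝ) ≤ δ, bernoulliWeight p ω :=
        sum_filter_exists_le_sum_sum_filter _ _ _ hW
    _ ≤ ∑ _x ∈ cfgs, B := by
        refine sum_le_sum fun x hx => ?_
        obtain ⟨hx, hT, hS⟩ := mem_filter.1 hx
        exact sum_bernoulliWeight_forall_card_nonadjacent_le hp0 hp1 hθ δ hS hT
          (mem_configurations.1 hx)
    _ ≤ 2 ^ n * (n : ℝ) ^ (m * K) * B := by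
        rw [sum_const, nsmul_eq_mul]
        exact mul_le_mul_of_nonneg_right
          ((Nat.cast_le.2 (card_filter_le _ _)).trans card_configurations_le) (Real.exp_pos _).le

end Configurations

lemma two_mul_exp_lt_one {s : ℝ} (hs : 4 ≤ s) :
    2 * Real.exp (s * (Real.log 4 / 4 - 3 / 4)) < 1 := by
  have hlog4 : Real.log 4 = 2 * Real.log 2 := by
    rw [show (4 : ℝ) = 2 ^ 2 by norm_num, Real.log_pow, Nat.cast_ofNat]
  have hlog2 := Real.log_two_lt_d9
  rw [← Real.exp_log two_pos, ← Real.exp_add, Real.exp_lt_one_iff, hlog4]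
  nlinarith [mul_le_mul_of_nonneg_left hlog2.le (by linarith : (0 : ℝ) ≤ s)]

/-- Whp `G(n,p)` contains no sets `S, T₁, …, T_K` with the `Tᵢ` pairwise disjoint `m`-sets,
`|S| ≥ γ n`, and for every `i`, all but at most `((1-p)^m/4) γ n` vertices of `S` adjacent
to some vertex of `Tᵢ`, provided `K > 4 / (γ (1-p)^{2m})`. -/
theorem stmt_8 (m : ℕ) (γ p : ℝ) (hγ : 0 < γ) (hp : 0 < p) (hp1 : p < 1) (K : ℕ)
    (hK : (K : ℝ) > 4 / (γ * (1 - p) ^ (2 * m))) (hple : ENNReal.ofReal p ≤ 1) :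
    Tendsto (fun n : ℕ =>
        gnpMeasure n p hple {ω | ¬ ∃ (S : Finset (Fin n)) (T : Fin K → Finset (Fin n)),
          (∀ i j, i ≠ j → Disjoint (T i) (T j)) ∧ (∀ i, (T i).card = m) ∧
          γ * n ≤ (S.card : ℝ) ∧
          ∀ i, ((S.filter fun v => ¬ ∃ w ∈ T i, gnpAdj ω v w).card : ℝ) ≤
            (1 - p) ^ m / 4 * (γ * n)})
      atTop (nhds 1) := by
  set q := (1 - p) ^ m
  have hq0 : 0 < q := pow_pos (by linarith) m
  have hq1 : q ≤ 1 := pow_le_one₀ (by linarith) (by linarith)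
  have hs : 4 ≤ q * γ * K := by
    rw [gt_iff_lt, div_lt_iff₀ (by positivity), two_mul, pow_add] at hK
    nlinarith [mul_le_mul_of_nonneg_left hq1 (by positivity : 0 ≤ (K : ℝ) * γ * q)]
  set ρ := 2 * Real.exp (q * γ * K * (Real.log 4 / 4 - 3 / 4))
  have hρ : |ρ| < 1 := by
    rw [abs_of_pos (by positivity)]
    exact two_mul_exp_lt_one hs
  refine tendsto_gnpMeasure_setOf_not hp.le hple _
    (f := fun n => Real.exp (3 / 4 * q * K ^ 2 * m) * (n ^ (m * K) * ρ ^ n)) ?_ fun n => ?_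
  · simpa using (tendsto_pow_const_mul_const_pow_of_abs_lt_one (m * K) hρ).const_mul _
  refine (sum_bernoulliWeight_exists_config_le hp.le hp1.le
    (Real.log_nonneg (by norm_num : (1 : ℝ) ≤ 4)) γ _).trans_eq ?_
  rw [Real.exp_neg, Real.exp_log (by norm_num), mul_pow, ← Real.exp_nat_mul]
  rw [show Real.log 4 * (K * (q / 4 * (γ * n))) - (1 - 4⁻¹) * q * (K * (γ * n - K * m)) =
      3 / 4 * q * K ^ 2 * m + n * (q * γ * K * (Real.log 4 / 4 - 3 / 4)) by ring, Real.exp_add]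
  ring
end

section
/- For all integers n ≥ 2, in the eternal vertex colouring game on the star K_{1,2n+1} played with 3 colours where both players must always use the smallest legally available colour (Alice moving first in each round since the graph has an even number of vertices), Alice has a winning strategy; that is, χ_g^{∞3}(K_{1,2n+1}) ≤ 3. -/
open Finset

section EternalGame

variable {V : Type*} [Fintype V] [DecidableEq V]

/-- The colour `c` is a legal (re)colouring of `v`: it differs from the current colour of
`v` (if any) and from the colours of all neighbours of `v`. -/
def LegalColour (G : SimpleGraph V) {k : ℕ} (col : V → Option (Fin k)) (v : V) (c : Fin k) :
    Prop :=
  col v ≠ some c ∧ ∀ w, G.Adj v w → col w ≠ some c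

/-- The colour `c` is the smallest legal colour for `v` (the greedy choice). -/
def GreedyColour (G : SimpleGraph V) {k : ℕ} (col : V → Option (Fin k)) (v : V) (c : Fin k) :
    Prop :=
  LegalColour G col v c ∧ ∀ c' : Fin k, c' < c → ¬ LegalColour G col v c'

/-- When all vertices have been coloured in the current round, a new round starts and all
vertices become available again. -/
def availReset (done : Finset V) : Finset V :=
  if done = (Finset.univ : Finset V) then ∅ else done

/-- `BobWins G k aliceGreedy col done turn` : from the position in the eternal vertex
colouring game on `G` with colours `Fin k` where the current (partial) colouring is `col`,
the vertices already (re)coloured in the current round are `done`, and it is Alice's turn iff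
`turn = true`, Bob can force a win.  Bob always plays greedily (the smallest legal colour),
and Alice is also required to play greedily iff `aliceGreedy = true`.  Bob wins by picking,
on his turn, a vertex with no legal colour; Alice loses if, whatever legal move she makes
(including when she has none, being then forced to pick an uncolourable vertex), Bob can
force a win afterwards. -/
inductive BobWins (G : SimpleGraph V) (k : ℕ) (aliceGreedy : Bool) :
    (V → Option (Fin k)) → Finset V → Bool → Prop where
  | bobStuck (col : V → Option (Fin k)) (done : Finset V)
      (h : ∃ v ∉ availReset done, ∀ c, ¬ LegalColour G col v c) :
      BobWins G k aliceGreedy col done false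
  | bobMove (col : V → Option (Fin k)) (done : Finset V) (v : V) (c : Fin k)
      (hv : v ∉ availReset done) (hc : GreedyColour G col v c)
      (h : BobWins G k aliceGreedy (Function.update col v (some c))
        (insert v (availReset done)) true) :
      BobWins G k aliceGreedy col done false
  | aliceMove (col : V → Option (Fin k)) (done : Finset V)
      (h : ∀ v ∉ availReset done, ∀ c : Fin k,
        (if aliceGreedy then GreedyColour G col v c else LegalColour G col v c) →
        BobWins G k aliceGreedy (Function.update col v (some c))
          (insert v (availReset done)) false) :
      BobWins G k aliceGreedy col done true

end EternalGame

/-- The star `K_{1,m}`: vertex `0` is the centre, adjacent to the `m` leaves. -/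
def starGraph (m : ℕ) : SimpleGraph (Fin (m + 1)) where
  Adj v w := v ≠ w ∧ (v = 0 ∨ w = 0)
  symm := by constructor; intro v w h; exact ⟨h.1.symm, h.2.symm⟩
  loopless := by constructor; intro v h; exact h.1 rfl

/-! Alice always recolours the centre first, greedily, and then any leaf. Every leaf is
recoloured from the same colour `b` next to the same centre colour `a`, so all leaves receive
the same greedy colour and agree again when the round ends; with three colours a leaf (two
forbidden colours) and the centre next to agreeing leaves always have a legal colour, so
nobody gets stuck. Since `K_{1,2n+1}` has an even number of vertices, the parity of the round
makes Alice open every round. -/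

section EternalGame

variable {V : Type*} [Fintype V] [DecidableEq V] {G : SimpleGraph V} {k : ℕ}
  {aliceGreedy : Bool}

lemma availReset_ne_univ [Nonempty V] (done : Finset V) : availReset done ≠ univ := by
  unfold availReset
  split_ifs with h
  · exact univ_nonempty.ne_empty.symm
  · exact h

theorem not_bobWins_of_invariant (S : (V → Option (Fin k)) → Finset V → Bool → Prop)
    (hunstuck : ∀ col done, S col done false →
      ∀ v ∉ availReset done, ∃ c, LegalColour G col v c)
    (hbob : ∀ col done v c, S col done false → v ∉ availReset done →
      GreedyColour G col v c →
      S (Function.update col v (some c)) (insert v (availReset done)) true)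
    (halice : ∀ col done, S col done true → ∃ v ∉ availReset done, ∃ c,
      (if aliceGreedy then GreedyColour G col v c else LegalColour G col v c) ∧
      S (Function.update col v (some c)) (insert v (availReset done)) false)
    {col : V → Option (Fin k)} {done : Finset V} {turn : Bool} (hS : S col done turn) :
    ¬ BobWins G k aliceGreedy col done turn := by
  intro hB
  induction hB with
  | bobStuck col done h =>
    obtain ⟨v, hv, hnone⟩ := h
    obtain ⟨c, hc⟩ := hunstuck col done hS v hv
    exact hnone c hc
  | bobMove col done v c hv hc _ ih => exact ih (hbob col done v c hS hv hc)
  | aliceMove col done _ ih =>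
    obtain ⟨v, hv, c, hc, hS'⟩ := halice col done hS
    exact ih v hv c hc hS'

end EternalGame

def leastAvoiding (x y : Option (Fin 3)) : Fin 3 :=
  if x ≠ some 0 ∧ y ≠ some 0 then 0 else if x ≠ some 1 ∧ y ≠ some 1 then 1 else 2

lemma leastAvoiding_spec :
    ∀ (x y : Option (Fin 3)) (c : Fin 3),
      ((x ≠ some c ∧ y ≠ some c) ∧ ∀ c' < c, ¬ (x ≠ some c' ∧ y ≠ some c')) ↔
        c = leastAvoiding x y := by
  decide

lemma greedyColour_iff_eq_leastAvoiding {V : Type*} {G : SimpleGraph V}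
    {col : V → Option (Fin 3)} {v : V} {x y : Option (Fin 3)}
    (h : ∀ c, LegalColour G col v c ↔ x ≠ some c ∧ y ≠ some c) (c : Fin 3) :
    GreedyColour G col v c ↔ c = leastAvoiding x y := by
  simp only [GreedyColour, h]
  exact leastAvoiding_spec x y c

section Star

variable {m k : ℕ}

lemma starGraph_legalColour_leaf (col : Fin (m + 1) → Option (Fin k)) {v : Fin (m + 1)}
    (hv : v ≠ 0) (c : Fin k) :
    LegalColour (starGraph m) col v c ↔ col v ≠ some c ∧ col 0 ≠ some c := by
  refine and_congr_right fun _ => ⟨fun h => h 0 ⟨hv, .inr rfl⟩, ?_⟩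
  rintro h w ⟨-, h0 | rfl⟩
  · exact absurd h0 hv
  · exact h

lemma starGraph_legalColour_centre (col : Fin (m + 2) → Option (Fin k))
    {b : Option (Fin k)} (hleaves : ∀ v ≠ 0, col v = b) (c : Fin k) :
    LegalColour (starGraph (m + 1)) col 0 c ↔ col 0 ≠ some c ∧ b ≠ some c := by
  refine and_congr_right fun _ => ⟨fun h => ?_, fun h w hw => hleaves w hw.1.symm ▸ h⟩
  have hleaf : (Fin.succ 0 : Fin (m + 2)) ≠ 0 := Fin.succ_ne_zero 0
  exact hleaves _ hleaf ▸ h _ ⟨hleaf.symm, .inl rfl⟩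

def LeavesAgree (col : Fin (m + 1) → Option (Fin 3)) : Prop :=
  ∃ b, ∀ v ≠ 0, col v = b

/-- `D` is the set of vertices recoloured so far in the current round, the centre first. -/
def MidRound (col : Fin (m + 1) → Option (Fin 3)) (D : Finset (Fin (m + 1))) : Prop :=
  0 ∈ D ∧ ∃ a b, col 0 = some a ∧
    ∀ v ≠ 0, col v = if v ∈ D then some (leastAvoiding b (some a)) else b

lemma MidRound.leavesAgree {col : Fin (m + 1) → Option (Fin 3)} (h : MidRound col univ) :
    LeavesAgree col := by
  obtain ⟨-, a, b, -, hleaves⟩ := h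
  exact ⟨_, fun v hv => (hleaves v hv).trans (if_pos (mem_univ v))⟩

lemma LeavesAgree.midRound_update_centre {col : Fin (m + 2) → Option (Fin 3)}
    (h : LeavesAgree col) :
    ∃ c, GreedyColour (starGraph (m + 1)) col 0 c ∧
      MidRound (Function.update col 0 (some c)) {0} := by
  obtain ⟨b, hb⟩ := h
  refine ⟨leastAvoiding (col 0) b,
    (greedyColour_iff_eq_leastAvoiding (starGraph_legalColour_centre col hb) _).2 rfl,
    mem_singleton_self 0, _, b, Function.update_self .., fun v hv => ?_⟩
  rw [Function.update_of_ne hv, if_neg (notMem_singleton.2 hv), hb v hv]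

lemma MidRound.update_leaf {col : Fin (m + 1) → Option (Fin 3)} {D : Finset (Fin (m + 1))}
    (h : MidRound col D) {v : Fin (m + 1)} (hv : v ∉ D) {c : Fin 3}
    (hc : GreedyColour (starGraph m) col v c) :
    MidRound (Function.update col v (some c)) (insert v D) := by
  obtain ⟨h0, a, b, ha, hleaves⟩ := h
  have hv0 : v ≠ 0 := fun h => hv (h ▸ h0)
  have hcol_v : col v = b := by simpa [hv] using hleaves v hv0
  have hc' : c = leastAvoiding b (some a) := by
    rwa [greedyColour_iff_eq_leastAvoiding (starGraph_legalColour_leaf col hv0), hcol_v, ha]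
      at hc
  refine ⟨mem_insert_of_mem h0, a, b, ?_, fun w hw => ?_⟩
  · rwa [Function.update_of_ne hv0.symm]
  · rcases eq_or_ne w v with rfl | hwv
    · simp [hc']
    · simp [hwv, hleaves w hw]

lemma MidRound.exists_legalColour {col : Fin (m + 1) → Option (Fin 3)}
    {D : Finset (Fin (m + 1))} (h : MidRound col D) {v : Fin (m + 1)} (hv : v ∉ D) :
    ∃ c, LegalColour (starGraph m) col v c := by
  have hv0 : v ≠ 0 := fun h' => hv (h' ▸ h.1)
  exact ⟨_, (starGraph_legalColour_leaf col hv0 _).2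
    ((leastAvoiding_spec _ _ _).2 rfl).1⟩

end Star

section OddStar

variable {n : ℕ}

lemma availReset_of_odd_card {s : Finset (Fin (2 * n + 1 + 1))} (h : Odd s.card) :
    availReset s = s := by
  refine if_neg fun hs => ?_
  rw [hs, card_univ, Fintype.card_fin] at h
  exact Nat.not_odd_iff_even.2 ⟨n + 1, by ring⟩ h

def StarInvariant (col : Fin (2 * n + 1 + 1) → Option (Fin 3))
    (done : Finset (Fin (2 * n + 1 + 1))) (turn : Bool) : Prop :=
  (availReset done = ∅ ∧ turn = true ∧ LeavesAgree col) ∨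
    (MidRound col (availReset done) ∧ (turn = true ↔ Even (availReset done).card))

lemma StarInvariant.bobMove {col : Fin (2 * n + 1 + 1) → Option (Fin 3)}
    {done : Finset (Fin (2 * n + 1 + 1))} (h : StarInvariant col done false)
    {v : Fin (2 * n + 1 + 1)} (hv : v ∉ availReset done) {c : Fin 3}
    (hc : GreedyColour (starGraph (2 * n + 1)) col v c) :
    StarInvariant (Function.update col v (some c)) (insert v (availReset done)) true := by
  obtain ⟨-, hturn, -⟩ | ⟨hmid, hturn⟩ := h
  · cases hturn
  have hmid' := hmid.update_leaf hv hc
  by_cases hfull : insert v (availReset done) = univ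
  · exact .inl ⟨if_pos hfull, rfl, (hfull ▸ hmid').leavesAgree⟩
  · refine .inr ⟨?_, ?_⟩
    · rwa [availReset, if_neg hfull]
    · rw [availReset, if_neg hfull, card_insert_of_notMem hv, Nat.even_add_one]
      simpa using hturn

lemma StarInvariant.aliceMove {col : Fin (2 * n + 1 + 1) → Option (Fin 3)}
    {done : Finset (Fin (2 * n + 1 + 1))} (h : StarInvariant col done true) :
    ∃ v ∉ availReset done, ∃ c, GreedyColour (starGraph (2 * n + 1)) col v c ∧
      StarInvariant (Function.update col v (some c)) (insert v (availReset done)) false := by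
  obtain ⟨hstart, -, hagree⟩ | ⟨hmid, hturn⟩ := h
  · obtain ⟨c, hc, hmid'⟩ := hagree.midRound_update_centre
    have hodd : Odd ({0} : Finset (Fin (2 * n + 1 + 1))).card := by simp
    refine ⟨0, by simp [hstart], c, hc, .inr ?_⟩
    rw [hstart, insert_empty, availReset_of_odd_card hodd]
    exact ⟨hmid', by simp⟩
  · obtain ⟨v, hv⟩ := not_forall.1 fun h' => availReset_ne_univ done (eq_univ_iff_forall.2 h')
    have hv0 : v ≠ 0 := fun h' => hv (h' ▸ hmid.1)
    obtain ⟨c, hc⟩ : ∃ c, GreedyColour (starGraph (2 * n + 1)) col v c :=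
      ⟨_, (greedyColour_iff_eq_leastAvoiding (starGraph_legalColour_leaf col hv0) _).2 rfl⟩
    have hodd : Odd (insert v (availReset done)).card := by
      rw [card_insert_of_notMem hv, Nat.odd_add_one, Nat.not_odd_iff_even]
      exact hturn.1 rfl
    refine ⟨v, hv, c, hc, .inr ?_⟩
    rw [availReset_of_odd_card hodd]
    exact ⟨hmid.update_leaf hv hc, by simpa using hodd⟩

lemma not_bobWins_starGraph_three :
    ¬ BobWins (starGraph (2 * n + 1)) 3 true (fun _ => none) ∅ true := by
  refine not_bobWins_of_invariant StarInvariant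
    (fun _ _ h v hv => ?_) (fun _ _ _ _ h hv hc => h.bobMove hv hc)
    (fun _ _ h => by simpa using h.aliceMove) (.inl ⟨if_neg ?_, rfl, none, fun _ _ => rfl⟩)
  · obtain ⟨-, hturn, -⟩ | ⟨hmid, -⟩ := h
    · cases hturn
    · exact hmid.exists_legalColour hv
  · exact univ_nonempty.ne_empty.symm

end OddStar

theorem stmt_14_general (n : ℕ) :
    ¬ BobWins (starGraph (2 * n + 1)) 3 true (fun _ => none) ∅ true ∧
    sInf {k : ℕ | ¬ BobWins (starGraph (2 * n + 1)) k true (fun _ => none) ∅ true} ≤ 3 :=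
  ⟨not_bobWins_starGraph_three, Nat.sInf_le not_bobWins_starGraph_three⟩

/-- In the eternal vertex colouring game on `K_{1,2n+1}` with `3` colours where both players
always play the smallest legal colour, Alice wins: `χ_g^{∞3}(K_{1,2n+1}) ≤ 3`. -/
theorem stmt_14 (n : ℕ) (hn : 2 ≤ n) :
    ¬ BobWins (starGraph (2 * n + 1)) 3 true (fun _ => none) ∅ true ∧
    sInf {k : ℕ | ¬ BobWins (starGraph (2 * n + 1)) k true (fun _ => none) ∅ true} ≤ 3 :=
  stmt_14_general n
end

section
/- There exist graphs G and H with H an induced subgraph of G such that χ_g^{∞2}(G) < χ_g^{∞2}(H), and likewise graphs G' and H' with H' an induced subgraph of G' such that χ_g^{∞3}(G') < χ_g^{∞3}(H'). In particular G = K_{1,2n+1} and H = K_{1,2n} witness both (for n ≥ 2). -/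
/-!
In the star `K_{1,m}` (centre `0`) a greedy leaf move depends only on the leaf's own colour and
the centre's colour, so once the centre has been recoloured in a round, the rest of the round is
forced. With `m` odd a round has an even number of moves and Alice opens every round; she
recolours the centre first, which keeps all leaves on one colour, so three colours suffice.
With `m` even the opener alternates. With at most three colours, Bob opens round two and either
the centre is stuck or all leaves share a colour, and then a greedy leaf move blocks the centre.
With four colours Alice recolours the centre as soon as she can; the leaves then stay in one of
finitely many patterns (one colour on all leaves but one), each leaving the centre a free colour.
-/

open Finset

/-- `χ_g^{∞2}` (for `aliceGreedy = false`) resp. `χ_g^{∞3}` (for `aliceGreedy = true`):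
the least number of colours with which Alice wins the eternal vertex colouring game where
Bob (resp. both players) must always play the smallest legal colour. -/
noncomputable def eternalChiGreedy {V : Type*} [Fintype V] [DecidableEq V]
    (G : SimpleGraph V) (aliceGreedy : Bool) : ℕ :=
  sInf {k : ℕ | ¬ BobWins G k aliceGreedy (fun _ => none) ∅ true}

section EternalGame

variable {V : Type*} {G : SimpleGraph V} {k : ℕ} {col : V → Option (Fin k)} {v : V} {c : Fin k}

def IsLeastNotMem (S : Finset (Fin k)) (c : Fin k) : Prop :=
  c ∉ S ∧ ∀ y < c, y ∈ S

instance (S : Finset (Fin k)) (c : Fin k) : Decidable (IsLeastNotMem S c) :=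
  inferInstanceAs (Decidable (_ ∧ _))

theorem GreedyColour.eq {c' : Fin k} (h : GreedyColour G col v c)
    (h' : GreedyColour G col v c') : c = c' := by
  rcases lt_trichotomy c c' with hlt | heq | hlt
  · exact absurd h.1 (h'.2 c hlt)
  · exact heq
  · exact absurd h'.1 (h.2 c' hlt)

theorem GreedyColour.allowed (h : GreedyColour G col v c) (ag : Bool) :
    if ag then GreedyColour G col v c else LegalColour G col v c := by
  cases ag
  exacts [h.1, h]

theorem LegalColour.of_allowed {ag : Bool}
    (h : if ag then GreedyColour G col v c else LegalColour G col v c) :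
    LegalColour G col v c := by
  cases ag
  exacts [h, h.1]

theorem exists_greedyColour (h : ∃ c, LegalColour G col v c) : ∃ c, GreedyColour G col v c := by
  obtain ⟨c, hc, hmin⟩ := wellFounded_lt.has_min {c | LegalColour G col v c} h
  exact ⟨c, hc, fun c' hc' hl => hmin c' hl hc'⟩

theorem greedyColour_iff_isLeastNotMem {S : Finset (Fin k)}
    (hS : ∀ y, LegalColour G col v y ↔ y ∉ S) :
    GreedyColour G col v c ↔ IsLeastNotMem S c := by
  simp only [GreedyColour, IsLeastNotMem, hS, not_not]

theorem greedyColour_uncoloured_zero [NeZero k] :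
    GreedyColour G (fun _ => none) v (0 : Fin k) :=
  ⟨⟨nofun, fun _ _ => nofun⟩, fun c' hc' => absurd hc' (Fin.not_lt_zero c')⟩

variable [DecidableEq V] {done : Finset V}

def FirstRound (G : SimpleGraph V) (col : V → Option (Fin k)) (done : Finset V) (turn : Bool) :
    Prop :=
  (∀ v, v ∈ done ↔ col v ≠ none) ∧ (∀ v w c, G.Adj v w → col v = some c → col w ≠ some c) ∧
    turn = decide (Even #done)

theorem FirstRound.update {turn : Bool} (h : FirstRound G col done turn) (hv : v ∉ done)
    (hc : LegalColour G col v c) :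
    FirstRound G (Function.update col v (some c)) (insert v done) (!turn) := by
  obtain ⟨hdone, hproper, hturn⟩ := h
  refine ⟨fun u => ?_, fun u w a huw hua => ?_, ?_⟩
  · by_cases hu : u = v
    · simp [hu]
    · simp [hu, hdone u]
  · by_cases hu : u = v
    · subst hu
      obtain rfl : c = a := Option.some.inj (by simpa using hua)
      rw [Function.update_of_ne huw.ne.symm]
      exact hc.2 w huw
    · rw [Function.update_of_ne hu] at hua
      by_cases hw : w = v
      · subst hw
        rw [Function.update_self]
        exact fun hca => hc.2 u huw.symm (hua.trans hca.symm)
      · rw [Function.update_of_ne hw]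
        exact hproper u w a huw hua
  · simp [card_insert_of_notMem hv, hturn, Nat.even_add_one, -Nat.not_even_iff_odd]

variable [Fintype V]

theorem availReset_of_ne_univ (h : done ≠ univ) : availReset done = done := if_neg h

theorem availReset_of_card_lt (h : #done < Fintype.card V) : availReset done = done :=
  availReset_of_ne_univ fun hu => by simp [hu] at h

theorem availReset_empty : availReset (∅ : Finset V) = ∅ := by
  unfold availReset; split <;> rfl

theorem availReset_univ : availReset (univ : Finset V) = ∅ := if_pos rfl

theorem exists_not_mem_availReset (h : done ≠ univ) : ∃ v, v ∉ availReset done := by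
  rw [availReset_of_ne_univ h]
  simpa [Finset.eq_univ_iff_forall] using h

theorem not_bobWins_of_greedy_invariant {ag : Bool}
    (P : (V → Option (Fin k)) → Finset V → Bool → Prop)
    (alice : ∀ col done, P col done true → ∃ v ∉ availReset done, ∃ c, GreedyColour G col v c ∧
      P (Function.update col v (some c)) (insert v (availReset done)) false)
    (bob : ∀ col done, P col done false → ∀ v ∉ availReset done,
      (∃ c, LegalColour G col v c) ∧ ∀ c, GreedyColour G col v c →
        P (Function.update col v (some c)) (insert v (availReset done)) true)
    {turn : Bool} (h : P col done turn) : ¬ BobWins G k ag col done turn := by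
  intro hwin
  induction hwin with
  | bobStuck col done hstuck =>
    obtain ⟨v, hv, hno⟩ := hstuck
    obtain ⟨c, hc⟩ := (bob col done h v hv).1
    exact hno c hc
  | bobMove col done v c hv hc _ ih => exact ih ((bob col done h v hv).2 c hc)
  | aliceMove col done _ ih =>
    obtain ⟨v, hv, c, hc, hP⟩ := alice col done h
    exact ih v hv c (hc.allowed ag) hP

/-- During the first round Bob cannot lose: on his turn he wins at once if some vertex is
stuck, and otherwise plays greedily. -/
theorem bobWins_of_bobWins_after_first_round {ag : Bool}
    (hend : ∀ col : V → Option (Fin k), (∀ v, col v ≠ none) →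
      (∀ v w c, G.Adj v w → col v = some c → col w ≠ some c) →
        BobWins G k ag col univ (decide (Even (Fintype.card V)))) :
    BobWins G k ag (fun _ => none) ∅ true := by
  suffices key : ∀ n col done turn, #done + n = Fintype.card V → FirstRound G col done turn →
      BobWins G k ag col done turn from
    key _ _ _ _ (zero_add _) ⟨by simp, by simp, by simp⟩
  intro n
  induction n with
  | zero =>
    intro col done turn hcard ⟨hdone, hproper, hturn⟩
    obtain rfl : done = univ := eq_univ_of_card _ hcard
    rw [hturn, card_univ]
    exact hend col (fun v => (hdone v).1 (mem_univ v)) hproper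
  | succ n ih =>
    intro col done turn hcard h
    have hne : done ≠ univ := fun hu => by rw [hu, card_univ] at hcard; omega
    have hnext : ∀ v ∉ done, #(insert v done) + n = Fintype.card V := fun v hv => by
      rw [card_insert_of_notMem hv]; omega
    rcases turn
    · by_cases hstuck : ∃ v ∉ availReset done, ∀ c, ¬ LegalColour G col v c
      · exact .bobStuck _ _ hstuck
      · push Not at hstuck
        obtain ⟨v, hv⟩ := exists_not_mem_availReset hne
        obtain ⟨c, hc⟩ := exists_greedyColour (hstuck v hv)
        refine .bobMove _ _ v c hv hc ?_
        rw [availReset_of_ne_univ hne] at hv ⊢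
        exact ih _ _ _ (hnext v hv) (h.update hv hc.1)
    · refine .aliceMove _ _ fun v hv c hc => ?_
      rw [availReset_of_ne_univ hne] at hv ⊢
      exact ih _ _ _ (hnext v hv) (h.update hv (LegalColour.of_allowed hc))

theorem eternalChiGreedy_le {ag : Bool} (h : ¬ BobWins G k ag (fun _ => none) ∅ true) :
    eternalChiGreedy G ag ≤ k :=
  Nat.sInf_le h

theorem eternalChiGreedy_eq {ag : Bool} (hwin : ¬ BobWins G k ag (fun _ => none) ∅ true)
    (hlose : ∀ j < k, BobWins G j ag (fun _ => none) ∅ true) : eternalChiGreedy G ag = k :=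
  (eternalChiGreedy_le hwin).antisymm <|
    le_csInf ⟨k, hwin⟩ fun j hj => not_lt.1 fun hjk => hj (hlose j hjk)

end EternalGame

section Star

variable {m k : ℕ} {col : Fin (m + 1) → Option (Fin k)} {done : Finset (Fin (m + 1))}
  {v : Fin (m + 1)} {c δ : Fin k}

theorem Fin.exists_ne_zero_of_one_le (hm : 1 ≤ m) : ∃ v : Fin (m + 1), v ≠ 0 :=
  ⟨Fin.last m, fun h => by simp [Fin.ext_iff] at h; omega⟩

theorem Fin.exists_ne_zero_ne_ne (hm : 3 ≤ m) (a b : Fin (m + 1)) :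
    ∃ v, v ≠ 0 ∧ v ≠ a ∧ v ≠ b := by
  obtain ⟨v, -, hv⟩ := exists_mem_notMem_of_card_lt_card (s := {0, a, b}) (t := univ) <|
    card_le_three.trans_lt (by simp; omega)
  exact ⟨v, by simpa using hv⟩

theorem Fin.eq_or_eq_or_eq_of_le_three (hk : k ≤ 3) {a b c : Fin k} (hab : a ≠ b) (hac : a ≠ c)
    (hbc : b ≠ c) (y : Fin k) : y = a ∨ y = b ∨ y = c := by
  simp only [ne_eq, Fin.ext_iff] at *
  omega

theorem starGraph_legalColour_leaf_iff (hv : v ≠ 0) :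
    LegalColour (starGraph m) col v c ↔ col v ≠ some c ∧ col 0 ≠ some c := by
  refine and_congr_right fun _ => ⟨fun h => h 0 ⟨hv, .inr rfl⟩, fun h w hw => ?_⟩
  obtain ⟨hvw, rfl | rfl⟩ := hw
  exacts [absurd rfl hv, h]

theorem starGraph_legalColour_centre_iff :
    LegalColour (starGraph m) col 0 c ↔ col 0 ≠ some c ∧ ∀ w ≠ 0, col w ≠ some c := by
  refine and_congr_right fun h0 => ⟨fun h w hw => h w ⟨hw.symm, .inl rfl⟩, fun h w hw => ?_⟩
  obtain ⟨hw, _ | rfl⟩ := hw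
  exacts [h w hw.symm, h0]

theorem starGraph_greedyColour_leaf_iff (hv : v ≠ 0) (h0 : col 0 = some δ) :
    GreedyColour (starGraph m) col v c ↔ IsLeastNotMem (insert δ (col v).toFinset) c := by
  refine greedyColour_iff_isLeastNotMem fun y => ?_
  rw [starGraph_legalColour_leaf_iff hv, h0]
  cases col v <;> simp [eq_comm, and_comm]

theorem starGraph_greedyColour_centre_iff {γ : Fin k} {p : Fin (m + 1) → Fin k}
    {S : Finset (Fin k)} (h0 : col 0 = some γ) (hp : ∀ w ≠ 0, col w = some (p w))
    (hS : ∀ y, y ∈ S ↔ y = γ ∨ ∃ w ≠ 0, p w = y) :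
    GreedyColour (starGraph m) col 0 c ↔ IsLeastNotMem S c := by
  refine greedyColour_iff_isLeastNotMem fun y => ?_
  rw [starGraph_legalColour_centre_iff, hS, h0]
  constructor
  · rintro ⟨hγ, hleaf⟩ (rfl | ⟨w, hw, rfl⟩)
    exacts [hγ rfl, hleaf w hw (hp w hw)]
  · intro h
    refine ⟨fun hγ => h (.inl (Option.some.inj hγ).symm), fun w hw hwy => h (.inr ⟨w, hw, ?_⟩)⟩
    exact Option.some.inj ((hp w hw).symm.trans hwy)

section Patterns

variable {ℓ₀ ℓ₁ : Fin (m + 1)} {b d x y : Fin k}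

theorem exists_ne_zero_update_const_eq_iff (hm : 3 ≤ m) (hℓ₀ : ℓ₀ ≠ 0) :
    (∃ w ≠ 0, Function.update (fun _ => b) ℓ₀ d w = y) ↔ y = b ∨ y = d := by
  refine ⟨fun ⟨w, _, hw⟩ => ?_, ?_⟩
  · by_cases hwℓ : w = ℓ₀ <;> simp_all [eq_comm]
  · rintro (rfl | rfl)
    · obtain ⟨w, hw, hwℓ, -⟩ := Fin.exists_ne_zero_ne_ne hm ℓ₀ ℓ₀
      exact ⟨w, hw, by simp [hwℓ]⟩
    · exact ⟨ℓ₀, hℓ₀, by simp⟩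

theorem exists_ne_zero_update_update_const_eq_iff (hm : 3 ≤ m) (hℓ₀ : ℓ₀ ≠ 0) (hℓ₁ : ℓ₁ ≠ 0)
    (hℓ : ℓ₁ ≠ ℓ₀) :
    (∃ w ≠ 0, Function.update (Function.update (fun _ => b) ℓ₀ d) ℓ₁ x w = y) ↔
      y = b ∨ y = d ∨ y = x := by
  refine ⟨fun ⟨w, _, hw⟩ => ?_, ?_⟩
  · by_cases hw₁ : w = ℓ₁
    · simp_all [eq_comm]
    · by_cases hw₀ : w = ℓ₀ <;> simp_all [eq_comm]
  · rintro (rfl | rfl | rfl)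
    · obtain ⟨w, hw, hw₀, hw₁⟩ := Fin.exists_ne_zero_ne_ne hm ℓ₀ ℓ₁
      exact ⟨w, hw, by simp [hw₀, hw₁]⟩
    · exact ⟨ℓ₀, hℓ₀, by simp [Ne.symm hℓ]⟩
    · exact ⟨ℓ₁, hℓ₁, by simp⟩

end Patterns

/-- The position in the middle of a round, after the centre has been recoloured `δ`: the leaves
in `D` have been recoloured to `f`, every other leaf `v` has greedy colour `f v`, and the
next round is opened by Alice iff `t`. -/
def Settling (δ : Fin k) (f : Fin (m + 1) → Fin k) (t : Bool) (col : Fin (m + 1) → Option (Fin k))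
    (done : Finset (Fin (m + 1))) (turn : Bool) : Prop :=
  ∃ D, 0 ∉ D ∧ done = insert 0 D ∧ (turn = t ↔ Even (m + #D)) ∧ col 0 = some δ ∧
    (∀ v ∈ D, col v = some (f v)) ∧
    ∀ v ≠ 0, v ∉ D → IsLeastNotMem (insert δ (col v).toFinset) (f v)

variable {f : Fin (m + 1) → Fin k} {t turn : Bool}

theorem settling_update_centre {D : Finset (Fin (m + 1))} (h0D : 0 ∉ D)
    (hD : ∀ v ∈ D, col v = some (f v))
    (hpending : ∀ v ≠ 0, v ∉ D → IsLeastNotMem (insert δ (col v).toFinset) (f v))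
    (hturn : turn = t ↔ Even (m + #D)) :
    Settling δ f t (Function.update col 0 (some δ)) (insert 0 D) turn := by
  refine ⟨D, h0D, rfl, hturn, Function.update_self .., fun v hv => ?_, fun v hv0 hvD => ?_⟩
  · rw [Function.update_of_ne (ne_of_mem_of_not_mem hv h0D)]
    exact hD v hv
  · rw [Function.update_of_ne hv0]
    exact hpending v hv0 hvD

theorem Settling.greedyColour (h : Settling δ f t col done turn) (hdone : done ≠ univ)
    (hv : v ∉ availReset done) : v ≠ 0 ∧ GreedyColour (starGraph m) col v (f v) := by
  obtain ⟨D, -, rfl, -, h0, -, hpending⟩ := h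
  rw [availReset_of_ne_univ hdone, mem_insert, not_or] at hv
  exact ⟨hv.1, (starGraph_greedyColour_leaf_iff hv.1 h0).2 (hpending v hv.1 hv.2)⟩

theorem Settling.update (h : Settling δ f t col done turn) (hdone : done ≠ univ)
    (hv : v ∉ availReset done) (hc : GreedyColour (starGraph m) col v c) :
    Settling δ f t (Function.update col v (some c)) (insert v (availReset done)) (!turn) := by
  obtain ⟨hv0, hgreedy⟩ := h.greedyColour hdone hv
  obtain rfl := hc.eq hgreedy
  obtain ⟨D, h0D, rfl, hturn, h0, hD, hpending⟩ := h
  rw [availReset_of_ne_univ hdone, mem_insert, not_or] at hv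
  rw [availReset_of_ne_univ hdone]
  refine ⟨insert v D, by simp [h0D, Ne.symm hv0], Finset.insert_comm .., ?_,
    by rwa [Function.update_of_ne hv0.symm], fun u hu => ?_, fun u hu0 huD => ?_⟩
  · rw [card_insert_of_notMem hv.2, ← add_assoc, Nat.even_add_one, ← hturn]
    cases turn <;> cases t <;> simp
  · by_cases huv : u = v
    · simp [huv]
    · rw [Function.update_of_ne huv]
      exact hD u ((mem_insert.1 hu).resolve_left huv)
  · rw [mem_insert, not_or] at huD
    rw [Function.update_of_ne huD.1]
    exact hpending u hu0 huD.2

theorem Settling.of_univ (h : Settling δ f t col univ turn) :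
    turn = t ∧ col 0 = some δ ∧ ∀ v ≠ 0, col v = some (f v) := by
  obtain ⟨D, h0D, hD0, hturn, h0, hD, -⟩ := h
  have hmem : ∀ v ≠ 0, v ∈ D := fun v hv => (mem_insert.1 (hD0 ▸ mem_univ v)).resolve_left hv
  have hcard : m = #D := by
    simpa [card_insert_of_notMem h0D] using congrArg card hD0
  exact ⟨hturn.2 (by rw [← hcard]; exact ⟨m, rfl⟩), h0, fun v hv => hD v (hmem v hv)⟩

theorem isLeastNotMem_round_fin_three : ∀ δ b : Fin 3, b ≠ δ →
    ∃ c b', IsLeastNotMem {δ, b} c ∧ IsLeastNotMem {c, b} b' ∧ b' ≠ c := by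
  decide

def OddStarPosition (col : Fin (m + 1) → Option (Fin 3)) (done : Finset (Fin (m + 1)))
    (turn : Bool) : Prop :=
  (col = (fun _ => none) ∧ done = ∅ ∧ turn = true) ∨
    ∃ δ b, b ≠ δ ∧ Settling δ (fun _ => b) true col done turn

theorem starGraph_not_bobWins_three (hm : Odd m) {ag : Bool} :
    ¬ BobWins (starGraph m) 3 ag (fun _ => none) ∅ true := by
  have hturn : (false = true ↔ Even (m + #(∅ : Finset (Fin (m + 1))))) := by
    simpa using Nat.not_even_iff_odd.2 hm
  refine not_bobWins_of_greedy_invariant OddStarPosition ?_ ?_ (.inl ⟨rfl, rfl, rfl⟩)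
  · rintro col done (⟨rfl, rfl, -⟩ | ⟨δ, b, hbδ, hS⟩)
    · refine ⟨0, by simp [availReset_empty], 0, greedyColour_uncoloured_zero,
        .inr ⟨0, 1, by decide, ?_⟩⟩
      rw [availReset_empty]
      exact settling_update_centre (notMem_empty 0) (by simp) (fun _ _ _ => by decide) hturn
    by_cases hdone : done = univ
    · subst hdone
      obtain ⟨-, h0, hleaf⟩ := hS.of_univ
      obtain ⟨c, b', hc, hb', hb'c⟩ := isLeastNotMem_round_fin_three δ b hbδ
      obtain ⟨ℓ, hℓ⟩ := Fin.exists_ne_zero_of_one_le hm.pos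
      refine ⟨0, by simp [availReset_univ], c, (starGraph_greedyColour_centre_iff h0 hleaf ?_).2 hc,
        .inr ⟨c, b', hb'c, ?_⟩⟩
      · intro y
        simp only [mem_insert, mem_singleton]
        exact or_congr_right ⟨fun h => ⟨ℓ, hℓ, h.symm⟩, fun ⟨_, _, h⟩ => h.symm⟩
      rw [availReset_univ]
      refine settling_update_centre (notMem_empty 0) (by simp) (fun v hv _ => ?_) hturn
      simpa [hleaf v hv] using hb'
    obtain ⟨v, hv⟩ := exists_not_mem_availReset hdone
    have hg := (hS.greedyColour hdone hv).2
    exact ⟨v, hv, b, hg, .inr ⟨δ, b, hbδ, hS.update hdone hv hg⟩⟩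
  · rintro col done (⟨-, -, ⟨⟩⟩ | ⟨δ, b, hbδ, hS⟩) v hv
    by_cases hdone : done = univ
    · subst hdone
      exact absurd hS.of_univ.1 Bool.false_ne_true
    have hg := (hS.greedyColour hdone hv).2
    exact ⟨⟨b, hg.1⟩, fun c hc => .inr ⟨δ, b, hbδ, hS.update hdone hv hc⟩⟩

section EvenStar

/-- The round-start positions on a star with an even number of leaves that Alice can reach by
always recolouring the centre first: the centre has colour `γ`, one special leaf has colour `d`,
all others colour `b`, and Alice opens the round iff `t`. -/
def SafePattern (γ b d : Fin 4) (t : Bool) : Prop :=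
  (γ, b, d, t) ∈ [(0, 1, 1, false), (0, 1, 1, true), (0, 1, 2, true), (0, 2, 1, false),
    (0, 2, 1, true), (0, 2, 2, false), (0, 2, 2, true), (1, 0, 0, false), (1, 0, 0, true),
    (1, 0, 2, true), (1, 2, 0, false), (1, 2, 2, false), (1, 2, 2, true), (2, 0, 0, false),
    (2, 0, 0, true), (2, 0, 1, true), (2, 1, 0, false), (2, 1, 1, false), (2, 1, 1, true),
    (3, 0, 0, false), (3, 0, 0, true), (3, 0, 1, true), (3, 0, 2, true), (3, 1, 0, false),
    (3, 1, 1, true), (3, 1, 2, true)]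

instance (γ b d : Fin 4) (t : Bool) : Decidable (SafePattern γ b d t) :=
  inferInstanceAs (Decidable (_ ∈ _))

theorem SafePattern.centre_step : ∀ γ b d t, SafePattern γ b d t →
    ∃ c b' d', IsLeastNotMem {γ, b, d} c ∧ IsLeastNotMem {c, b} b' ∧ IsLeastNotMem {c, d} d' ∧
      SafePattern c b' d' (!t) := by
  decide

theorem SafePattern.special_leaf_move : ∀ γ b d x, SafePattern γ b d false →
    IsLeastNotMem {γ, d} x →
    ∃ c b', IsLeastNotMem {γ, b, x} c ∧ IsLeastNotMem {c, b} b' ∧ SafePattern c b' x true := by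
  decide

theorem SafePattern.majority_leaf_move : ∀ γ b d x, SafePattern γ b d false →
    IsLeastNotMem {γ, b} x →
    ∃ c b' d', IsLeastNotMem {γ, b, d, x} c ∧ IsLeastNotMem {c, b} b' ∧ IsLeastNotMem {c, d} d' ∧
      (b' = x ∧ SafePattern c b' d' true ∨ b' = d' ∧ SafePattern c b' x true) := by
  decide

/-- The positions of Alice's strategy on an even star: the start, the middle of a round after the
centre has moved, and the position after Bob has opened a round by recolouring the leaf `ℓ₁`
(to `x`) instead of the centre. -/
def EvenStarPosition (col : Fin (m + 1) → Option (Fin 4)) (done : Finset (Fin (m + 1)))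
    (turn : Bool) : Prop :=
  (col = (fun _ => none) ∧ done = ∅ ∧ turn = true) ∨
  (∃ γ b d ℓ₀ t, ℓ₀ ≠ 0 ∧ SafePattern γ b d t ∧
    Settling γ (Function.update (fun _ => b) ℓ₀ d) t col done turn) ∨
  ∃ γ b d ℓ₀ ℓ₁ x, ℓ₀ ≠ 0 ∧ ℓ₁ ≠ 0 ∧ SafePattern γ b d false ∧
    IsLeastNotMem {γ, Function.update (fun _ => b) ℓ₀ d ℓ₁} x ∧ col 0 = some γ ∧
    (∀ v ≠ 0, col v = some (Function.update (Function.update (fun _ => b) ℓ₀ d) ℓ₁ x v)) ∧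
    done = {ℓ₁} ∧ turn = true

variable {ℓ₀ ℓ₁ : Fin (m + 1)} {col : Fin (m + 1) → Option (Fin 4)} {γ b d x : Fin 4}

theorem evenStarPosition_recolour_centre (hm : 3 ≤ m) (he : Even m) (hℓ₀ : ℓ₀ ≠ 0)
    (hsafe : SafePattern γ b d t)
    (h : Settling γ (Function.update (fun _ => b) ℓ₀ d) t col univ turn) :
    ∃ c, GreedyColour (starGraph m) col 0 c ∧
      EvenStarPosition (Function.update col 0 (some c)) (insert 0 (availReset univ)) (!turn) := by
  obtain ⟨rfl, h0, hleaf⟩ := h.of_univ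
  obtain ⟨c, b', d', hc, hb', hd', hsafe'⟩ := SafePattern.centre_step γ b d turn hsafe
  refine ⟨c, (starGraph_greedyColour_centre_iff h0 hleaf fun y => ?_).2 hc,
    .inr (.inl ⟨c, b', d', ℓ₀, !turn, hℓ₀, hsafe', ?_⟩)⟩
  · simp [exists_ne_zero_update_const_eq_iff hm hℓ₀]
  rw [availReset_univ]
  refine settling_update_centre (notMem_empty 0) (by simp) (fun v hv _ => ?_) (by simpa using he)
  rw [hleaf v hv]
  by_cases hvℓ : v = ℓ₀ <;> simpa [hvℓ]

theorem evenStarPosition_answer_special_leaf_move (hm : 3 ≤ m) (he : Even m) (hℓ₀ : ℓ₀ ≠ 0)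
    (hsafe : SafePattern γ b d false) (hx : IsLeastNotMem {γ, d} x) (h0 : col 0 = some γ)
    (hleaf : ∀ v ≠ 0, col v = some (Function.update (fun _ => b) ℓ₀ x v)) :
    ∃ c, GreedyColour (starGraph m) col 0 c ∧
      EvenStarPosition (Function.update col 0 (some c)) (insert 0 {ℓ₀}) false := by
  obtain ⟨c, b', hc, hb', hsafe'⟩ := SafePattern.special_leaf_move γ b d x hsafe hx
  refine ⟨c, (starGraph_greedyColour_centre_iff h0 hleaf fun y => ?_).2 hc,
    .inr (.inl ⟨c, b', x, ℓ₀, true, hℓ₀, hsafe', ?_⟩)⟩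
  · simp [exists_ne_zero_update_const_eq_iff hm hℓ₀]
  refine settling_update_centre (by simpa using hℓ₀.symm) (by simp [hleaf ℓ₀ hℓ₀])
    (fun v hv hvℓ => ?_) (by simpa [Nat.even_add_one] using he)
  rw [mem_singleton] at hvℓ
  simpa [hleaf v hv, hvℓ] using hb'

theorem evenStarPosition_answer_majority_leaf_move (hm : 3 ≤ m) (he : Even m) (hℓ₀ : ℓ₀ ≠ 0)
    (hℓ₁ : ℓ₁ ≠ 0) (hℓ : ℓ₁ ≠ ℓ₀) (hsafe : SafePattern γ b d false) (hx : IsLeastNotMem {γ, b} x)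
    (h0 : col 0 = some γ)
    (hleaf : ∀ v ≠ 0, col v = some (Function.update (Function.update (fun _ => b) ℓ₀ d) ℓ₁ x v)) :
    ∃ c, GreedyColour (starGraph m) col 0 c ∧
      EvenStarPosition (Function.update col 0 (some c)) (insert 0 {ℓ₁}) false := by
  obtain ⟨c, b', d', hc, hb', hd', hnext⟩ := SafePattern.majority_leaf_move γ b d x hsafe hx
  refine ⟨c, (starGraph_greedyColour_centre_iff h0 hleaf fun y => ?_).2 hc, .inr (.inl ?_)⟩
  · simp [exists_ne_zero_update_update_const_eq_iff hm hℓ₀ hℓ₁ hℓ]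
  have hturn : (false = true ↔ Even (m + #{ℓ₁})) := by simpa [Nat.even_add_one] using he
  have hpending : ∀ v ≠ 0, v ∉ ({ℓ₁} : Finset _) →
      IsLeastNotMem (insert c (col v).toFinset) (if v = ℓ₀ then d' else b') := fun v hv hvℓ => by
    rw [mem_singleton] at hvℓ
    by_cases hv₀ : v = ℓ₀
    · subst hv₀
      simpa [hleaf v hv, Function.update_of_ne hvℓ] using hd'
    · simpa [hleaf v hv, hvℓ, hv₀] using hb'
  rcases hnext with ⟨rfl, hsafe'⟩ | ⟨rfl, hsafe'⟩
  · refine ⟨c, b', d', ℓ₀, true, hℓ₀, hsafe', settling_update_centre (by simpa using hℓ₁.symm)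
      (by simp [hleaf ℓ₁ hℓ₁, hℓ]) (fun v hv hvℓ => ?_) hturn⟩
    simpa [Function.update_apply] using hpending v hv hvℓ
  · refine ⟨c, b', x, ℓ₁, true, hℓ₁, hsafe', settling_update_centre (by simpa using hℓ₁.symm)
      (by simp [hleaf ℓ₁ hℓ₁]) (fun v hv hvℓ => ?_) hturn⟩
    have := hpending v hv hvℓ
    rw [mem_singleton] at hvℓ
    by_cases hv₀ : v = ℓ₀ <;> simp_all [Function.update_apply]

theorem EvenStarPosition.alice_move (hm : 3 ≤ m) (he : Even m) {done : Finset (Fin (m + 1))}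
    (h : EvenStarPosition col done true) :
    ∃ v ∉ availReset done, ∃ c, GreedyColour (starGraph m) col v c ∧
      EvenStarPosition (Function.update col v (some c)) (insert v (availReset done)) false := by
  rcases h with ⟨rfl, rfl, -⟩ | ⟨γ, b, d, ℓ₀, t, hℓ₀, hsafe, hS⟩ |
      ⟨γ, b, d, ℓ₀, ℓ₁, x, hℓ₀, hℓ₁, hsafe, hx, h0, hleaf, rfl, -⟩
  · obtain ⟨ℓ₀, hℓ₀, -⟩ := Fin.exists_ne_zero_ne_ne hm 0 0
    refine ⟨0, by simp [availReset_empty], 0, greedyColour_uncoloured_zero,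
      .inr (.inl ⟨0, 1, 1, ℓ₀, false, hℓ₀, by decide, ?_⟩)⟩
    rw [availReset_empty]
    refine settling_update_centre (notMem_empty 0) (by simp) (fun v _ _ => ?_) (by simpa using he)
    rw [Function.update_apply]
    split <;> decide
  · by_cases hdone : done = univ
    · subst hdone
      obtain rfl := hS.of_univ.1
      obtain ⟨c, hc, hpos⟩ := evenStarPosition_recolour_centre hm he hℓ₀ hsafe hS
      exact ⟨0, by simp [availReset_univ], c, hc, hpos⟩
    obtain ⟨v, hv⟩ := exists_not_mem_availReset hdone
    have hg := (hS.greedyColour hdone hv).2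
    exact ⟨v, hv, _, hg, .inr (.inl ⟨γ, b, d, ℓ₀, t, hℓ₀, hsafe, hS.update hdone hv hg⟩)⟩
  · rw [availReset_of_card_lt (by simp; omega)]
    refine ⟨0, by simpa using hℓ₁.symm, ?_⟩
    by_cases hℓ : ℓ₁ = ℓ₀
    · subst hℓ
      simp only [Function.update_idem, Function.update_self] at hx hleaf
      exact evenStarPosition_answer_special_leaf_move hm he hℓ₁ hsafe hx h0 hleaf
    · rw [Function.update_of_ne hℓ] at hx
      exact evenStarPosition_answer_majority_leaf_move hm he hℓ₀ hℓ₁ hℓ hsafe hx h0 hleaf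

theorem EvenStarPosition.bob_move (hm : 3 ≤ m) (he : Even m) {done : Finset (Fin (m + 1))}
    (h : EvenStarPosition col done false) (hv : v ∉ availReset done) :
    (∃ c, LegalColour (starGraph m) col v c) ∧ ∀ c, GreedyColour (starGraph m) col v c →
      EvenStarPosition (Function.update col v (some c)) (insert v (availReset done)) true := by
  rcases h with ⟨-, -, ⟨⟩⟩ | ⟨γ, b, d, ℓ₀, t, hℓ₀, hsafe, hS⟩ |
    ⟨-, -, -, -, -, -, -, -, -, -, -, -, -, ⟨⟩⟩
  by_cases hdone : done = univ
  swap
  · have hg := (hS.greedyColour hdone hv).2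
    exact ⟨⟨_, hg.1⟩, fun c hc => .inr (.inl ⟨γ, b, d, ℓ₀, t, hℓ₀, hsafe, hS.update hdone hv hc⟩)⟩
  subst hdone
  obtain ⟨rfl, h0, hleaf⟩ := hS.of_univ
  by_cases hv0 : v = 0
  · subst hv0
    obtain ⟨c, hc, hpos⟩ := evenStarPosition_recolour_centre hm he hℓ₀ hsafe hS
    exact ⟨⟨c, hc.1⟩, fun c' hc' => hc'.eq hc ▸ hpos⟩
  have hfree : ∀ a₁ a₂ : Fin 4, ∃ c, c ≠ a₁ ∧ c ≠ a₂ := by decide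
  obtain ⟨c, hc₁, hc₂⟩ := hfree (Function.update (fun _ => b) ℓ₀ d v) γ
  refine ⟨⟨c, (starGraph_legalColour_leaf_iff hv0).2 ⟨?_, ?_⟩⟩, fun x hx => .inr (.inr ?_)⟩
  · simpa [hleaf v hv0] using hc₁.symm
  · simpa [h0] using hc₂.symm
  rw [starGraph_greedyColour_leaf_iff hv0 h0, hleaf v hv0] at hx
  refine ⟨γ, b, d, ℓ₀, v, x, hℓ₀, hv0, hsafe, by simpa using hx, by simp [Ne.symm hv0, h0],
    fun w hw => ?_, by simp [availReset_univ], rfl⟩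
  by_cases hwv : w = v
  · simp [hwv]
  · simp [Function.update_of_ne hwv, hleaf w hw]

theorem starGraph_not_bobWins_four (hm : 3 ≤ m) (he : Even m) {ag : Bool} :
    ¬ BobWins (starGraph m) 4 ag (fun _ => none) ∅ true :=
  not_bobWins_of_greedy_invariant EvenStarPosition (fun _ _ h => h.alice_move hm he)
    (fun _ _ h _ hv => h.bob_move hm he hv) (.inl ⟨rfl, rfl, rfl⟩)

end EvenStar

/-- After Bob's greedy move of a leaf to `x`, the centre sees all three colours, and any other
leaf that Alice recolours must go to `x` too, after which the centre is stuck. -/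
theorem starGraph_bobWins_after_leaf_move (hm : 3 ≤ m) {ag : Bool} {γ b x : Fin k}
    (hcover : ∀ y, y = γ ∨ y = b ∨ y = x) {ℓ₁ : Fin (m + 1)} (hℓ₁ : ℓ₁ ≠ 0)
    (h0 : col 0 = some γ) (huniform : ∀ w ≠ 0, col w = some b) :
    BobWins (starGraph m) k ag (Function.update col ℓ₁ (some x)) {ℓ₁} true := by
  refine .aliceMove _ _ fun v hv c hc => ?_
  replace hc := LegalColour.of_allowed hc
  rw [availReset_of_card_lt (by simp; omega), mem_singleton] at hv
  rw [availReset_of_card_lt (by simp; omega)]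
  by_cases hv0 : v = 0
  · subst hv0
    obtain ⟨ℓ₂, hℓ₂, hℓ₂₁, -⟩ := Fin.exists_ne_zero_ne_ne hm ℓ₁ ℓ₁
    rw [starGraph_legalColour_centre_iff, Function.update_of_ne hℓ₁.symm, h0] at hc
    have hcℓ₁ := hc.2 ℓ₁ hℓ₁
    have hcℓ₂ := hc.2 ℓ₂ hℓ₂
    rw [Function.update_self] at hcℓ₁
    rw [Function.update_of_ne hℓ₂₁, huniform ℓ₂ hℓ₂] at hcℓ₂
    rcases hcover c with rfl | rfl | rfl <;> simp_all
  rw [starGraph_legalColour_leaf_iff hv0, Function.update_of_ne hv, Function.update_of_ne hℓ₁.symm,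
    huniform v hv0, h0] at hc
  obtain rfl : c = x := by rcases hcover c with h | h | h <;> simp_all
  refine .bobStuck _ _ ⟨0, ?_, fun c hc => ?_⟩
  · rw [availReset_of_card_lt (card_le_two.trans_lt (by simp; omega))]
    simp [Ne.symm hv0, Ne.symm hℓ₁]
  obtain ⟨ℓ₃, hℓ₃, hℓ₃₁, hℓ₃v⟩ := Fin.exists_ne_zero_ne_ne hm ℓ₁ v
  rw [starGraph_legalColour_centre_iff, Function.update_of_ne (Ne.symm hv0),
    Function.update_of_ne hℓ₁.symm, h0] at hc
  have hcℓ₁ := hc.2 ℓ₁ hℓ₁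
  have hcℓ₃ := hc.2 ℓ₃ hℓ₃
  rw [Function.update_of_ne (Ne.symm hv), Function.update_self] at hcℓ₁
  rw [Function.update_of_ne hℓ₃v, Function.update_of_ne hℓ₃₁, huniform ℓ₃ hℓ₃] at hcℓ₃
  rcases hcover c with rfl | rfl | rfl <;> simp_all

theorem starGraph_bobWins_round_two (hm : 3 ≤ m) (hk : k ≤ 3) {ag : Bool}
    (col : Fin (m + 1) → Option (Fin k)) (htot : ∀ v, col v ≠ none)
    (hproper : ∀ v w c, (starGraph m).Adj v w → col v = some c → col w ≠ some c) :
    BobWins (starGraph m) k ag col univ false := by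
  obtain ⟨γ, h0⟩ := Option.ne_none_iff_exists'.1 (htot 0)
  by_cases hcentre : ∃ x, LegalColour (starGraph m) col 0 x
  swap
  · exact .bobStuck _ _ ⟨0, by simp [availReset_univ], fun c hc => hcentre ⟨c, hc⟩⟩
  obtain ⟨x, hx⟩ := hcentre
  rw [starGraph_legalColour_centre_iff, h0] at hx
  have hleaf : ∀ w ≠ 0, ∃ a, col w = some a ∧ a ≠ γ ∧ a ≠ x := fun w hw => by
    obtain ⟨a, ha⟩ := Option.ne_none_iff_exists'.1 (htot w)
    refine ⟨a, ha, fun haγ => hproper 0 w γ ⟨hw.symm, .inl rfl⟩ h0 (haγ ▸ ha), fun hax => ?_⟩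
    exact hx.2 w hw (hax ▸ ha)
  obtain ⟨ℓ₁, hℓ₁, -⟩ := Fin.exists_ne_zero_ne_ne hm 0 0
  obtain ⟨b, hb, hbγ, hbx⟩ := hleaf ℓ₁ hℓ₁
  have hxγ : x ≠ γ := fun h => hx.1 (h ▸ rfl)
  have hcover := Fin.eq_or_eq_or_eq_of_le_three hk hbγ.symm hxγ.symm hbx
  have huniform : ∀ w ≠ 0, col w = some b := fun w hw => by
    obtain ⟨a, ha, haγ, hax⟩ := hleaf w hw
    obtain rfl : a = b := by rcases hcover a with h | h | h <;> tauto
    exact ha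
  have hgreedy : GreedyColour (starGraph m) col ℓ₁ x := by
    rw [starGraph_greedyColour_leaf_iff hℓ₁ h0, hb]
    refine ⟨by simp [hxγ, hbx.symm], fun y hy => ?_⟩
    rcases hcover y with h | h | rfl
    · simp [h]
    · simp [h]
    · exact absurd hy (lt_irrefl y)
  refine .bobMove _ _ ℓ₁ x (by simp [availReset_univ]) hgreedy ?_
  rw [availReset_univ, insert_empty]
  exact starGraph_bobWins_after_leaf_move hm hcover hℓ₁ h0 huniform

theorem starGraph_bobWins_of_le_three (hm : 3 ≤ m) (he : Even m) (hk : k ≤ 3) {ag : Bool} :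
    BobWins (starGraph m) k ag (fun _ => none) ∅ true := by
  refine bobWins_of_bobWins_after_first_round fun col htot hproper => ?_
  have hodd : decide (Even (Fintype.card (Fin (m + 1)))) = false := by
    simpa [Nat.even_add_one] using he
  rw [hodd]
  exact starGraph_bobWins_round_two hm hk col htot hproper

theorem eternalChiGreedy_starGraph_of_even (hm : 3 ≤ m) (he : Even m) (ag : Bool) :
    eternalChiGreedy (starGraph m) ag = 4 :=
  eternalChiGreedy_eq (starGraph_not_bobWins_four hm he) fun _ hj =>
    starGraph_bobWins_of_le_three hm he (by omega)

theorem eternalChiGreedy_starGraph_le_of_odd (hm : Odd m) (ag : Bool) :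
    eternalChiGreedy (starGraph m) ag ≤ 3 :=
  eternalChiGreedy_le (starGraph_not_bobWins_three hm)

theorem starGraph_adj_castSucc_iff (a b : Fin (m + 1)) :
    (starGraph m).Adj a b ↔ (starGraph (m + 1)).Adj a.castSucc b.castSucc := by
  simp [starGraph, Fin.castSucc_inj, Fin.castSucc_eq_zero_iff]

end Star

/-- Neither `χ_g^{∞2}` nor `χ_g^{∞3}` is monotone under induced subgraphs: there are graphs
`H ≤ G` (induced) with `χ_g^{∞2}(G) < χ_g^{∞2}(H)` and likewise for `χ_g^{∞3}`; the stars
`G = K_{1,2n+1}`, `H = K_{1,2n}` (`n ≥ 2`) witness both. -/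
theorem stmt_16 :
    (∃ (m : ℕ) (G : SimpleGraph (Fin (m + 1))) (H : SimpleGraph (Fin m))
        (φ : Fin m ↪ Fin (m + 1)),
      (∀ a b, H.Adj a b ↔ G.Adj (φ a) (φ b)) ∧
      eternalChiGreedy G false < eternalChiGreedy H false) ∧
    (∃ (m : ℕ) (G : SimpleGraph (Fin (m + 1))) (H : SimpleGraph (Fin m))
        (φ : Fin m ↪ Fin (m + 1)),
      (∀ a b, H.Adj a b ↔ G.Adj (φ a) (φ b)) ∧
      eternalChiGreedy G true < eternalChiGreedy H true) ∧
    ∀ n : ℕ, 2 ≤ n → ∃ φ : Fin (2 * n + 1) ↪ Fin (2 * n + 2),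
      (∀ a b, (starGraph (2 * n)).Adj a b ↔ (starGraph (2 * n + 1)).Adj (φ a) (φ b)) ∧
      eternalChiGreedy (starGraph (2 * n + 1)) false < eternalChiGreedy (starGraph (2 * n)) false ∧
      eternalChiGreedy (starGraph (2 * n + 1)) true < eternalChiGreedy (starGraph (2 * n)) true := by
  have stars : ∀ n : ℕ, 2 ≤ n → ∀ ag, eternalChiGreedy (starGraph (2 * n + 1)) ag <
      eternalChiGreedy (starGraph (2 * n)) ag := fun n hn ag => by
    rw [eternalChiGreedy_starGraph_of_even (by omega) ⟨n, two_mul n⟩]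
    exact (eternalChiGreedy_starGraph_le_of_odd ⟨n, rfl⟩ ag).trans_lt (by norm_num)
  have embed : ∀ n : ℕ, ∀ a b, (starGraph (2 * n)).Adj a b ↔
      (starGraph (2 * n + 1)).Adj (Fin.castSuccEmb a) (Fin.castSuccEmb b) :=
    fun _ => starGraph_adj_castSucc_iff
  exact ⟨⟨_, _, _, _, embed 2, stars 2 le_rfl false⟩, ⟨_, _, _, _, embed 2, stars 2 le_rfl true⟩,
    fun n hn => ⟨_, embed n, stars n hn false, stars n hn true⟩⟩
end
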